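/- Let μ > −1/2 be real, n ∈ ℕ and x ∈ ℂ, with the convention H_{−1}^μ = 0. Then 2n H_{n−1}^μ(x) + (γ_μ(n+1)/((n+1) γ_μ(n))) H_{n+1}^μ(x) = 2x H_n^μ(x) (three-term recursion). -/

import Mathlib

open MeasureTheory
open scoped BigOperators Nat

/-- Generalized factorial `γ_μ(n)`: `γ_μ(0) = 1`,
`γ_μ(n+1) = (n + 1 + 2μ θ_{n+1}) γ_μ(n)` where `θ_k = 1` if `k` is odd, `0` if even. -/
noncomputable def genGamma (μ : ℝ) : ℕ → ℝ
  | 0 => 1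
  | n + 1 => ((n : ℝ) + 1 + 2 * μ * (if (n + 1) % 2 = 1 then (1 : ℝ) else 0)) * genGamma μ n

/-- Generalized exponential function `e_μ(z) = Σ_{n≥0} z^n / γ_μ(n)`. -/
noncomputable def genExp (μ : ℝ) (z : ℂ) : ℂ :=
  ∑' n : ℕ, z ^ n / (genGamma μ n : ℂ)

/-- Generalized Hermite polynomial
`H_n^μ(x) = n! Σ_{k=0}^{⌊n/2⌋} (-1)^k (2x)^{n-2k} / (k! γ_μ(n-2k))`. -/
noncomputable def genHermite (μ : ℝ) (n : ℕ) (x : ℂ) : ℂ :=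
  (n ! : ℂ) * ∑ k ∈ Finset.range (n / 2 + 1),
    (-1) ^ k * (2 * x) ^ (n - 2 * k) / ((k ! : ℂ) * ((genGamma μ (n - 2 * k) : ℝ) : ℂ))

/-- Dunkl operator `(D_μ f)(x) = f'(x) + (μ/x)(f(x) - f(-x))`. -/
noncomputable def dunkl (μ : ℝ) (f : ℝ → ℂ) (x : ℝ) : ℂ :=
  deriv f x + ((μ / x : ℝ) : ℂ) * (f x - f (-x))

/-- Euler beta function `B(a,b) = Γ(a)Γ(b)/Γ(a+b)`. -/
noncomputable def realBeta (a b : ℝ) : ℝ :=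
  Real.Gamma a * Real.Gamma b / Real.Gamma (a + b)

/-
Comparing coefficients of `(2x)^(n+1-2k)`, the recursion reduces to
`γ_μ(n+1)/γ_μ(n) - 2k = γ_μ(n+1-2k)/γ_μ(n-2k)`. Both sides are values of the step factor
`γ_μ(m+1)/γ_μ(m) = m + 1 + 2μθ_{m+1}`, and since `θ` only sees the parity of its index this
factor grows by exactly `2k` when `m` grows by `2k`. In the boundary case `n + 1 = 2k` the
left side vanishes because `θ_{n+1} = 0`.
-/

open Finset

noncomputable def genGammaStep (μ : ℝ) (n : ℕ) : ℝ :=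
  (n : ℝ) + 1 + 2 * μ * (if (n + 1) % 2 = 1 then (1 : ℝ) else 0)

theorem genGamma_succ (μ : ℝ) (n : ℕ) :
    genGamma μ (n + 1) = genGammaStep μ n * genGamma μ n := rfl

theorem genGammaStep_add_two_mul (μ : ℝ) (m k : ℕ) :
    genGammaStep μ (m + 2 * k) = genGammaStep μ m + 2 * k := by
  have hpar : (m + 2 * k + 1) % 2 = (m + 1) % 2 := by omega
  simp only [genGammaStep, hpar]
  push_cast
  ring

theorem genGammaStep_two_mul_add_one (μ : ℝ) (k : ℕ) :
    genGammaStep μ (2 * k + 1) = 2 * k + 2 := by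
  have hpar : (2 * k + 1 + 1) % 2 ≠ 1 := by omega
  simp only [genGammaStep, if_neg hpar]
  push_cast
  ring

theorem genGamma_pos {μ : ℝ} (hμ : -(1 / 2) < μ) (n : ℕ) : 0 < genGamma μ n := by
  induction n with
  | zero => exact one_pos
  | succ n ih =>
    refine genGamma_succ μ n ▸ mul_pos ?_ ih
    have : (0 : ℝ) ≤ n := n.cast_nonneg
    unfold genGammaStep
    split_ifs <;> linarith

-- Zero for `2k > n`, so that `H_n^μ` may be summed over any range of `k` past `n / 2`.
noncomputable def genHermiteCoeff (μ : ℝ) (n k : ℕ) : ℂ :=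
  if 2 * k ≤ n then (-1) ^ k * (n ! : ℂ) / ((k ! : ℂ) * (genGamma μ (n - 2 * k) : ℂ)) else 0

theorem genHermite_eq_sum (μ : ℝ) (n : ℕ) (x : ℂ) {N : ℕ} (hN : n / 2 + 1 ≤ N) :
    genHermite μ n x = ∑ k ∈ range N, genHermiteCoeff μ n k * (2 * x) ^ (n - 2 * k) := by
  rw [genHermite, mul_sum, ← sum_subset (range_subset_range.2 hN)]
  · refine sum_congr rfl fun k hk => ?_
    rw [genHermiteCoeff, if_pos (by simp at hk; omega)]
    ring
  · intro k _ hk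
    rw [genHermiteCoeff, if_neg (by simp at hk; omega), zero_mul]

theorem genHermiteCoeff_mul_pow_mul (μ : ℝ) (n k : ℕ) (y : ℂ) :
    genHermiteCoeff μ n k * y ^ (n - 2 * k) * y = genHermiteCoeff μ n k * y ^ (n + 1 - 2 * k) := by
  by_cases hk : 2 * k ≤ n
  · rw [show n + 1 - 2 * k = n - 2 * k + 1 by omega, pow_succ, mul_assoc]
  · simp [genHermiteCoeff, hk]

theorem two_mul_mul_genHermite (μ : ℝ) (n : ℕ) (x : ℂ) {N : ℕ} (hN : n / 2 + 1 ≤ N) :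
    2 * x * genHermite μ n x =
      ∑ k ∈ range N, genHermiteCoeff μ n k * (2 * x) ^ (n + 1 - 2 * k) := by
  rw [genHermite_eq_sum μ n x hN, mul_sum]
  exact sum_congr rfl fun k _ => by rw [← genHermiteCoeff_mul_pow_mul, mul_comm]

theorem sum_range_succ_mul_pow_add_two_sub {R : Type*} [Semiring R] (f : ℕ → R) (y : R)
    (m N : ℕ) :
    ∑ k ∈ range (N + 1), f k * y ^ (m + 2 - 2 * k) =
      ∑ k ∈ range N, f (k + 1) * y ^ (m - 2 * k) + f 0 * y ^ (m + 2) := by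
  rw [sum_range_succ']
  simp only [show ∀ k, m + 2 - 2 * (k + 1) = m - 2 * k by omega, Nat.mul_zero, Nat.sub_zero]

section

variable {μ : ℝ} (hγ : ∀ n, genGamma μ n ≠ 0)
include hγ

theorem genGamma_succ_div (n : ℕ) :
    genGamma μ (n + 1) / (((n : ℝ) + 1) * genGamma μ n) = genGammaStep μ n / ((n : ℝ) + 1) := by
  have := hγ n
  rw [genGamma_succ]
  field_simp

theorem genHermiteCoeff_succ_zero (n : ℕ) :
    ((genGamma μ (n + 1) / (((n : ℝ) + 1) * genGamma μ n) : ℝ) : ℂ) * genHermiteCoeff μ (n + 1) 0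
      = genHermiteCoeff μ n 0 := by
  have : (genGamma μ n : ℂ) ≠ 0 := by exact_mod_cast hγ n
  have : (genGamma μ (n + 1) : ℂ) ≠ 0 := by exact_mod_cast hγ (n + 1)
  simp only [genHermiteCoeff, zero_le, if_true, Nat.mul_zero, Nat.sub_zero, pow_zero,
    Nat.factorial_zero]
  push_cast [Nat.factorial_succ]
  field_simp

theorem genHermiteCoeff_three_term {m k : ℕ} (hk : 2 * k ≤ m) :
    2 * ((m + 1 : ℕ) : ℂ) * genHermiteCoeff μ m k +
        ((genGamma μ (m + 1 + 1) / ((((m + 1 : ℕ) : ℝ) + 1) * genGamma μ (m + 1)) : ℝ) : ℂ) *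
          genHermiteCoeff μ (m + 1 + 1) (k + 1)
      = genHermiteCoeff μ (m + 1) (k + 1) := by
  rw [genGamma_succ_div hγ]
  simp only [genHermiteCoeff, if_pos hk, if_pos (show 2 * (k + 1) ≤ m + 1 + 1 by omega),
    show m + 1 + 1 - 2 * (k + 1) = m - 2 * k by omega]
  have hk1 : ((k : ℂ) + 1) ≠ 0 := by exact_mod_cast k.succ_ne_zero
  have hm2 : ((m : ℂ) + 1 + 1) ≠ 0 := by exact_mod_cast (m + 1).succ_ne_zero
  have hkf : (k ! : ℂ) ≠ 0 := by exact_mod_cast k.factorial_ne_zero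
  generalize hj : m - 2 * k = j
  have hγj : (genGamma μ j : ℂ) ≠ 0 := by exact_mod_cast hγ j
  cases j with
  | zero =>
    obtain rfl : m = 2 * k := by omega
    rw [if_neg (by omega), genGammaStep_two_mul_add_one]
    push_cast [Nat.factorial_succ] at hm2 ⊢
    field_simp
    ring
  | succ i =>
    have hstep : genGammaStep μ (m + 1) = genGammaStep μ i + 2 * (k + 1 : ℕ) := by
      rw [← genGammaStep_add_two_mul, show i + 2 * (k + 1) = m + 1 by omega]
    rw [if_pos (by omega), show m + 1 - 2 * (k + 1) = i by omega, genGamma_succ, hstep]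
    have hγi : (genGamma μ i : ℂ) ≠ 0 := by exact_mod_cast hγ i
    have hs : (genGammaStep μ i : ℂ) ≠ 0 := by
      have := hγ (i + 1)
      rw [genGamma_succ] at this
      exact_mod_cast left_ne_zero_of_mul this
    push_cast [Nat.factorial_succ]
    field_simp
    ring

end

/-- Three-term recursion: for `μ > -1/2`, `n ∈ ℕ`, `x ∈ ℂ`
(with the convention `H_{-1}^μ = 0`, which is immaterial since the coefficient `2n`
vanishes when `n = 0`):
`2n H_{n-1}^μ(x) + (γ_μ(n+1)/((n+1)γ_μ(n))) H_{n+1}^μ(x) = 2x H_n^μ(x)`. -/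
theorem genHermite_three_term_recursion (μ : ℝ) (hμ : -(1/2) < μ) (n : ℕ) (x : ℂ) :
    2 * (n : ℂ) * genHermite μ (n - 1) x +
        ((genGamma μ (n + 1) / (((n : ℝ) + 1) * genGamma μ n) : ℝ) : ℂ) *
          genHermite μ (n + 1) x
      = 2 * x * genHermite μ n x := by
  have hγ : ∀ m, genGamma μ m ≠ 0 := fun m => (genGamma_pos hμ m).ne'
  cases n with
  | zero =>
    rw [genHermite_eq_sum μ 1 x (N := 1) le_rfl, two_mul_mul_genHermite μ 0 x (N := 1) le_rfl]
    simp [← genHermiteCoeff_succ_zero hγ 0, mul_assoc]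
  | succ m =>
    rw [Nat.add_sub_cancel, genHermite_eq_sum μ m x le_rfl,
      genHermite_eq_sum μ (m + 1 + 1) x (N := m / 2 + 1 + 1) (by omega),
      two_mul_mul_genHermite μ (m + 1) x (N := m / 2 + 1 + 1) (by omega),
      sum_range_succ_mul_pow_add_two_sub, sum_range_succ_mul_pow_add_two_sub,
      ← genHermiteCoeff_succ_zero hγ (m + 1)]
    set c : ℂ := ((genGamma μ (m + 1 + 1) / ((((m + 1 : ℕ) : ℝ) + 1) * genGamma μ (m + 1)) : ℝ) : ℂ)
    have hcoeff : ∑ k ∈ range (m / 2 + 1), genHermiteCoeff μ (m + 1) (k + 1) * (2 * x) ^ (m - 2 * k)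
        = ∑ k ∈ range (m / 2 + 1), (2 * ((m + 1 : ℕ) : ℂ) * genHermiteCoeff μ m k
            + c * genHermiteCoeff μ (m + 1 + 1) (k + 1)) * (2 * x) ^ (m - 2 * k) :=
      sum_congr rfl fun k hk => by
        rw [genHermiteCoeff_three_term hγ (by simp at hk; omega)]
    rw [hcoeff]
    simp only [add_mul, sum_add_distrib, mul_sum, mul_add, mul_assoc]
    ring
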